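/- arXiv:2012.10679 — 2 statements merged into one kernel-verified Lean document; each statement's English description precedes it below -/
import Mathlib

section
/- Let L be a positive integer and E an L×L Hermitian positive definite complex matrix. Then for every L×L Hermitian positive definite complex matrix W, (tr(W·E)).re − log((det W).re) ≥ L + log((det E).re), with equality if and only if W = E⁻¹. In other words, the unique minimizer over Hermitian positive definite weight matrices W of the weighted-MSE objective tr(W E) − log det W is W = E⁻¹, and the minimum value is L + log det E. -/
/-!
Write `E = Bᴴ B` with `B` invertible and set `M = B W Bᴴ`, which is again positive definite.
Then `tr (W E) = tr M` and `det M = det W · det E`, so the objective equals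
`tr M - log det M + log det E`. In terms of the eigenvalues `λᵢ > 0` of `M`,
`tr M - log det M = ∑ (λᵢ - log λᵢ) ≥ L`, since `log x ≤ x - 1` with equality only at `x = 1`;
equality thus forces every `λᵢ = 1`, i.e. `M = 1`, i.e. `W = (Bᴴ B)⁻¹ = E⁻¹`.
-/

open Matrix ComplexOrder

namespace Real

lemma one_le_sub_log {x : ℝ} (hx : 0 < x) : 1 ≤ x - log x := by
  linarith [log_le_sub_one_of_pos hx]

lemma sub_log_eq_one_iff {x : ℝ} (hx : 0 < x) : x - log x = 1 ↔ x = 1 := by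
  refine ⟨fun h => ?_, fun h => by simp [h]⟩
  by_contra hx1
  linarith [log_lt_sub_one_of_pos hx hx1]

end Real

namespace Matrix

section RCLike

variable {𝕜 n : Type*} [RCLike 𝕜] [Fintype n] [DecidableEq n] {A : Matrix n n 𝕜}

open RCLike

lemma IsHermitian.re_trace_eq_sum_eigenvalues (hA : A.IsHermitian) :
    re A.trace = ∑ i, hA.eigenvalues i := by
  simp [hA.trace_eq_sum_eigenvalues]

lemma IsHermitian.re_det_eq_prod_eigenvalues (hA : A.IsHermitian) :
    re A.det = ∏ i, hA.eigenvalues i := by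
  rw [hA.det_eq_prod_eigenvalues, ← ofReal_prod, ofReal_re]

lemma IsHermitian.im_det_eq_zero (hA : A.IsHermitian) : im A.det = 0 := by
  rw [← conj_eq_iff_im, ← star_def, ← det_conjTranspose, hA.eq]

lemma IsHermitian.re_det_mul (hA : A.IsHermitian) (B : Matrix n n 𝕜) :
    re (A * B).det = re A.det * re B.det := by
  rw [det_mul, mul_re, hA.im_det_eq_zero, zero_mul, sub_zero]

lemma IsHermitian.eq_one_of_eigenvalues_eq_one (hA : A.IsHermitian)
    (h : ∀ i, hA.eigenvalues i = 1) : A = 1 := by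
  rw [hA.spectral_theorem]
  simp [Function.comp_def, h]

lemma PosDef.re_det_pos (hA : A.PosDef) : 0 < re A.det := by
  rw [hA.isHermitian.re_det_eq_prod_eigenvalues]
  exact Finset.prod_pos fun i _ => hA.eigenvalues_pos i

lemma PosDef.re_trace_sub_log_re_det (hA : A.PosDef) :
    re A.trace - Real.log (re A.det) =
      ∑ i, (hA.isHermitian.eigenvalues i - Real.log (hA.isHermitian.eigenvalues i)) := by
  rw [hA.isHermitian.re_trace_eq_sum_eigenvalues, hA.isHermitian.re_det_eq_prod_eigenvalues,
    Real.log_prod fun i _ => (hA.eigenvalues_pos i).ne', Finset.sum_sub_distrib]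

lemma PosDef.card_le_re_trace_sub_log_re_det (hA : A.PosDef) :
    (Fintype.card n : ℝ) ≤ re A.trace - Real.log (re A.det) := by
  rw [hA.re_trace_sub_log_re_det, ← Finset.card_univ, ← nsmul_one, ← Finset.sum_const]
  exact Finset.sum_le_sum fun i _ => Real.one_le_sub_log (hA.eigenvalues_pos i)

lemma PosDef.re_trace_sub_log_re_det_eq_card_iff (hA : A.PosDef) :
    re A.trace - Real.log (re A.det) = Fintype.card n ↔ A = 1 := by
  refine ⟨fun h => hA.isHermitian.eq_one_of_eigenvalues_eq_one fun i => ?_,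
    fun h => by simp [h]⟩
  rw [hA.re_trace_sub_log_re_det, ← Finset.card_univ, ← nsmul_one, ← Finset.sum_const] at h
  have := (Finset.sum_eq_sum_iff_of_le fun i _ => Real.one_le_sub_log (hA.eigenvalues_pos i)).mp
    h.symm i (Finset.mem_univ i)
  exact (Real.sub_log_eq_one_iff (hA.eigenvalues_pos i)).mp this.symm

lemma PosDef.exists_isUnit_eq_conjTranspose_mul_self (hA : A.PosDef) :
    ∃ B : Matrix n n 𝕜, IsUnit B ∧ A = Bᴴ * B := by
  open scoped MatrixOrder in
  obtain ⟨B, rfl⟩ := CStarAlgebra.nonneg_iff_eq_star_mul_self.mp hA.posSemidef.nonneg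
  exact ⟨B, isUnit_of_mul_isUnit_right hA.isUnit, rfl⟩

end RCLike

section CommRing

variable {R n : Type*} [CommRing R] [Fintype n] [DecidableEq n]

lemma mul_mul_eq_one_iff_eq_inv {A B W : Matrix n n R} (h : IsUnit (B * A)) :
    A * W * B = 1 ↔ W = (B * A)⁻¹ := by
  rw [mul_assoc, mul_eq_one_comm, mul_assoc]
  refine ⟨fun hW => (inv_eq_left_inv hW).symm, ?_⟩
  rintro rfl
  exact nonsing_inv_mul _ ((isUnit_iff_isUnit_det _).mp h)

end CommRing

end Matrix

theorem weight_update_optimal_general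
    (L : ℕ)
    (E : Matrix (Fin L) (Fin L) ℂ) (hE : E.PosDef) :
    ∀ W : Matrix (Fin L) (Fin L) ℂ, W.PosDef →
      ((L : ℝ) + Real.log ((E.det).re) ≤ ((W * E).trace).re - Real.log ((W.det).re) ∧
       (((W * E).trace).re - Real.log ((W.det).re) = (L : ℝ) + Real.log ((E.det).re) ↔
         W = E⁻¹)) := by
  intro W hW
  simp only [← RCLike.re_to_complex]
  obtain ⟨B, hB, hEB⟩ := hE.exists_isUnit_eq_conjTranspose_mul_self
  set M := B * W * Bᴴ
  have hM : M.PosDef := hB.posDef_star_right_conjugate_iff.mpr hW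
  have hdet : RCLike.re M.det = RCLike.re W.det * RCLike.re E.det := by
    rw [← hW.isHermitian.re_det_mul, hEB]
    simp only [M, det_mul]
    ring_nf
  have htrace : (W * E).trace = M.trace := by
    rw [hEB, trace_mul_comm, trace_mul_cycle B]
  have hobj : RCLike.re (W * E).trace - Real.log (RCLike.re W.det) =
      (RCLike.re M.trace - Real.log (RCLike.re M.det)) + Real.log (RCLike.re E.det) := by
    rw [htrace, hdet, Real.log_mul hW.re_det_pos.ne' hE.re_det_pos.ne']
    ring
  have hmin := hM.card_le_re_trace_sub_log_re_det
  have heq := hM.re_trace_sub_log_re_det_eq_card_iff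
  rw [Fintype.card_fin] at hmin heq
  rw [hobj, hEB, ← mul_mul_eq_one_iff_eq_inv (hEB ▸ hE.isUnit), ← hEB, add_left_inj]
  exact ⟨by linarith, heq⟩

/-- For an `L × L` Hermitian positive definite matrix `E`, the unique
minimizer over Hermitian positive definite weight matrices `W` of
`Re (tr (W E)) - log (Re (det W))` is `W = E⁻¹`, with minimum value `L + log (Re (det E))`. -/
theorem weight_update_optimal
    (L : ℕ) (hL : 0 < L)
    (E : Matrix (Fin L) (Fin L) ℂ) (hE : E.PosDef) :
    ∀ W : Matrix (Fin L) (Fin L) ℂ, W.PosDef →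
      ((L : ℝ) + Real.log ((E.det).re) ≤ ((W * E).trace).re - Real.log ((W.det).re) ∧
       (((W * E).trace).re - Real.log ((W.det).re) = (L : ℝ) + Real.log ((E.det).re) ↔
         W = E⁻¹)) :=
  weight_update_optimal_general L E hE
end

section
/- Let L be a positive integer, F an L×L complex matrix, J̄ an L×L Hermitian positive definite complex matrix, J = F Fᴴ + J̄, and for an L×L complex matrix G define E(G) = I_L − Gᴴ F − Fᴴ G + Gᴴ J G. Then for every L×L complex matrix G and every L×L Hermitian positive definite complex matrix W, (tr(W·E(G))).re − log((det W).re) ≥ L − log((det(I_L + Fᴴ J̄⁻¹ F)).re), and equality holds for G* = J⁻¹ F and W* = (E(G*))⁻¹. Hence the minimum over (G, W) of the per-user WMMSE objective tr(W E(G)) − log det W equals L − R, where R = log det(I_L + Fᴴ J̄⁻¹ F) is the achievable rate. -/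
/-!
Completing the square in `G` gives `E(G) = E(G*) + (G - G*)ᴴ J (G - G*)` with `G* = J⁻¹ F`, and
the Woodbury identity identifies `E(G*) = I - Fᴴ J⁻¹ F` with `(I + Fᴴ J̄⁻¹ F)⁻¹`. For positive
definite `W` and `A = Bᴴ B`, the eigenvalues `λᵢ` of `B W Bᴴ` satisfy `λᵢ - log λᵢ ≥ 1`, whence
`tr (W A) - log det W ≥ L + log det A`, with equality when `W = A⁻¹`.
-/

open Matrix ComplexOrder
open scoped MatrixOrder

namespace Matrix

section Algebra

variable {m k R : Type*} [Fintype m] [DecidableEq m] [DecidableEq k] [CommRing R]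

lemma inv_one_add_mul_inv_mul [Fintype k] {U : Matrix k m R} {V : Matrix m k R}
    {C : Matrix m m R} (hC : IsUnit C) (hVUC : IsUnit (V * U + C)) :
    (1 + U * C⁻¹ * V)⁻¹ = 1 - U * (V * U + C)⁻¹ * V := by
  have hCC : C⁻¹⁻¹ = C := nonsing_inv_nonsing_inv C ((isUnit_iff_isUnit_det C).mp hC)
  have := add_mul_mul_inv_eq_sub 1 U C⁻¹ V isUnit_one (isUnit_nonsing_inv_iff.mpr hC)
    (by rwa [hCC, inv_one, Matrix.mul_one, add_comm])
  simp only [hCC, inv_one, Matrix.mul_one, Matrix.one_mul] at this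
  rwa [add_comm C] at this

variable [StarRing R]

def mseMatrix (F : Matrix m k R) (J : Matrix m m R) (G : Matrix m k R) : Matrix k k R :=
  1 - Gᴴ * F - Fᴴ * G + Gᴴ * J * G

variable {J : Matrix m m R}

lemma mseMatrix_inv_mul (hJ : J.IsHermitian) (hJu : IsUnit J.det) (F : Matrix m k R) :
    mseMatrix F J (J⁻¹ * F) = 1 - Fᴴ * J⁻¹ * F := by
  rw [mseMatrix, conjTranspose_mul, hJ.inv.eq, Matrix.mul_assoc (Fᴴ * J⁻¹) J,
    mul_nonsing_inv_cancel_left _ _ hJu, Matrix.mul_assoc Fᴴ]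
  abel

lemma mseMatrix_eq_add (hJ : J.IsHermitian) (hJu : IsUnit J.det) (F G : Matrix m k R) :
    mseMatrix F J G =
      mseMatrix F J (J⁻¹ * F) + (G - J⁻¹ * F)ᴴ * J * (G - J⁻¹ * F) := by
  simp only [mseMatrix, conjTranspose_sub, conjTranspose_mul, hJ.inv.eq, Matrix.sub_mul,
    Matrix.mul_sub, Matrix.mul_assoc, mul_nonsing_inv_cancel_left _ _ hJu,
    nonsing_inv_mul_cancel_left _ _ hJu]
  abel

end Algebra

section LogDet

variable {n 𝕜 : Type*} [Fintype n] [DecidableEq n] [RCLike 𝕜]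

lemma PosSemidef.re_trace_mul_nonneg {W P : Matrix n n 𝕜} (hW : W.PosSemidef)
    (hP : P.PosSemidef) : 0 ≤ RCLike.re (W * P).trace := by
  obtain ⟨B, rfl⟩ := CStarAlgebra.nonneg_iff_eq_star_mul_self.mp hP.nonneg
  rw [← Matrix.mul_assoc, trace_mul_comm, ← Matrix.mul_assoc]
  exact (RCLike.nonneg_iff.mp (hW.mul_mul_conjTranspose_same B).trace_nonneg).1

lemma PosDef.re_det_pos_s6 {A : Matrix n n 𝕜} (hA : A.PosDef) : 0 < RCLike.re A.det :=
  (RCLike.pos_iff.mp hA.det_pos).1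

lemma PosDef.re_det_mul {A : Matrix n n 𝕜} (hA : A.PosDef) (z : 𝕜) :
    RCLike.re (A.det * z) = RCLike.re A.det * RCLike.re z := by
  rw [RCLike.mul_re, (RCLike.pos_iff.mp hA.det_pos).2, zero_mul, sub_zero]

lemma PosDef.log_re_det_inv {A : Matrix n n 𝕜} (hA : A.PosDef) :
    Real.log (RCLike.re A⁻¹.det) = -Real.log (RCLike.re A.det) := by
  obtain ⟨x, -, hx⟩ := RCLike.pos_iff_exists_ofReal.mp hA.det_pos
  rw [det_nonsing_inv, Ring.inverse_eq_inv', ← hx, ← RCLike.ofReal_inv, RCLike.ofReal_re,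
    RCLike.ofReal_re, Real.log_inv]

lemma PosDef.card_le_re_trace_sub_log_re_det_s6 {M : Matrix n n 𝕜} (hM : M.PosDef) :
    (Fintype.card n : ℝ) ≤ RCLike.re M.trace - Real.log (RCLike.re M.det) := by
  have hev := hM.eigenvalues_pos
  rw [hM.isHermitian.trace_eq_sum_eigenvalues, hM.isHermitian.det_eq_prod_eigenvalues,
    ← RCLike.ofReal_sum, ← RCLike.ofReal_prod, RCLike.ofReal_re, RCLike.ofReal_re,
    Real.log_prod fun i _ => (hev i).ne', ← Finset.sum_sub_distrib, ← Finset.card_univ,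
    Finset.card_eq_sum_ones, Nat.cast_sum, Nat.cast_one]
  gcongr with i
  linarith [Real.log_le_sub_one_of_pos (hev i)]

lemma PosDef.card_add_log_re_det_le {W A : Matrix n n 𝕜} (hW : W.PosDef) (hA : A.PosDef) :
    (Fintype.card n : ℝ) + Real.log (RCLike.re A.det) ≤
      RCLike.re (W * A).trace - Real.log (RCLike.re W.det) := by
  obtain ⟨B, rfl⟩ := CStarAlgebra.nonneg_iff_eq_star_mul_self.mp hA.posSemidef.nonneg
  have hB : IsUnit B := by
    rw [isUnit_iff_isUnit_det]
    refine isUnit_of_mul_isUnit_right (x := (star B).det) ?_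
    rw [← det_mul]
    exact hA.det_pos.ne'.isUnit
  have hM : (B * W * Bᴴ).PosDef := hW.mul_mul_conjTranspose_same (vecMul_injective_of_isUnit hB)
  have htr : (B * W * Bᴴ).trace = (W * (star B * B)).trace := by
    rw [trace_mul_comm, ← Matrix.mul_assoc, star_eq_conjTranspose, trace_mul_comm]
  have hdet : (B * W * Bᴴ).det = W.det * (star B * B).det := by
    rw [det_mul, det_mul, det_mul, star_eq_conjTranspose]
    ring
  have := hM.card_le_re_trace_sub_log_re_det_s6
  rw [htr, hdet, hW.re_det_mul, Real.log_mul hW.re_det_pos_s6.ne' hA.re_det_pos_s6.ne'] at this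
  linarith

end LogDet

end Matrix

theorem wmmse_objective_min_eq_L_sub_rate_general
    (L : ℕ)
    (F Jbar : Matrix (Fin L) (Fin L) ℂ) (hJbar : Jbar.PosDef)
    (J : Matrix (Fin L) (Fin L) ℂ) (hJ : J = F * Fᴴ + Jbar)
    (E : Matrix (Fin L) (Fin L) ℂ → Matrix (Fin L) (Fin L) ℂ)
    (hE : ∀ G, E G = 1 - Gᴴ * F - Fᴴ * G + Gᴴ * J * G)
    (Gstar : Matrix (Fin L) (Fin L) ℂ) (hGstar : Gstar = J⁻¹ * F)
    (Wstar : Matrix (Fin L) (Fin L) ℂ) (hWstar : Wstar = (E Gstar)⁻¹) :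
    (∀ (G W : Matrix (Fin L) (Fin L) ℂ), W.PosDef →
        (L : ℝ) - Real.log (((1 + Fᴴ * Jbar⁻¹ * F).det).re) ≤
          ((W * E G).trace).re - Real.log ((W.det).re)) ∧
    ((Wstar * E Gstar).trace).re - Real.log ((Wstar.det).re) =
      (L : ℝ) - Real.log (((1 + Fᴴ * Jbar⁻¹ * F).det).re) := by
  obtain rfl : E = mseMatrix F J := funext hE
  subst hGstar hWstar
  have hJ_pd : J.PosDef := hJ ▸ hJbar.posSemidef_add (posSemidef_self_mul_conjTranspose F)
  have hJ_det : IsUnit J.det := (isUnit_iff_isUnit_det J).mp hJ_pd.isUnit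
  set K := 1 + Fᴴ * Jbar⁻¹ * F
  have hK_pd : K.PosDef :=
    PosDef.one.add_posSemidef (hJbar.inv.posSemidef.conjTranspose_mul_mul_same F)
  have hE_star : mseMatrix F J (J⁻¹ * F) = K⁻¹ := by
    rw [mseMatrix_inv_mul hJ_pd.isHermitian hJ_det,
      inv_one_add_mul_inv_mul hJbar.isUnit (hJ ▸ hJ_pd.isUnit), ← hJ]
  constructor
  · intro G W hW
    have hmin := hW.card_add_log_re_det_le hK_pd.inv
    have hgap := hW.posSemidef.re_trace_mul_nonneg
      (hJ_pd.posSemidef.conjTranspose_mul_mul_same (G - J⁻¹ * F))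
    rw [hK_pd.log_re_det_inv, Fintype.card_fin] at hmin
    rw [mseMatrix_eq_add hJ_pd.isHermitian hJ_det, hE_star, Matrix.mul_add, trace_add,
      Complex.add_re]
    simp only [RCLike.re_to_complex] at hmin hgap
    linarith
  · have hK_det : IsUnit K.det := (isUnit_iff_isUnit_det K).mp hK_pd.isUnit
    rw [hE_star, nonsing_inv_nonsing_inv _ hK_det, mul_nonsing_inv _ hK_det, trace_one,
      Fintype.card_fin]
    simp

/-- With `J = F Fᴴ + J̄`, `J̄` Hermitian positive definite, and the MSE
matrix `E(G) = I - Gᴴ F - Fᴴ G + Gᴴ J G`, for every `G` and every Hermitian positive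
definite weight `W` one has
`Re (tr (W E(G))) - log (Re (det W)) ≥ L - log (Re (det (I + Fᴴ J̄⁻¹ F)))`,
with equality at `G* = J⁻¹ F` and `W* = (E(G*))⁻¹`.  Hence the minimum of the
WMMSE objective equals `L - R` where `R = log det (I + Fᴴ J̄⁻¹ F)` is the rate. -/
theorem wmmse_objective_min_eq_L_sub_rate
    (L : ℕ) (hL : 0 < L)
    (F Jbar : Matrix (Fin L) (Fin L) ℂ) (hJbar : Jbar.PosDef)
    (J : Matrix (Fin L) (Fin L) ℂ) (hJ : J = F * Fᴴ + Jbar)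
    (E : Matrix (Fin L) (Fin L) ℂ → Matrix (Fin L) (Fin L) ℂ)
    (hE : ∀ G, E G = 1 - Gᴴ * F - Fᴴ * G + Gᴴ * J * G)
    (Gstar : Matrix (Fin L) (Fin L) ℂ) (hGstar : Gstar = J⁻¹ * F)
    (Wstar : Matrix (Fin L) (Fin L) ℂ) (hWstar : Wstar = (E Gstar)⁻¹) :
    (∀ (G W : Matrix (Fin L) (Fin L) ℂ), W.PosDef →
        (L : ℝ) - Real.log (((1 + Fᴴ * Jbar⁻¹ * F).det).re) ≤
          ((W * E G).trace).re - Real.log ((W.det).re)) ∧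
    ((Wstar * E Gstar).trace).re - Real.log ((Wstar.det).re) =
      (L : ℝ) - Real.log (((1 + Fᴴ * Jbar⁻¹ * F).det).re) :=
  wmmse_objective_min_eq_L_sub_rate_general L F Jbar hJbar J hJ E hE Gstar hGstar Wstar hWstar
end
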